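/- Let M be a topological space. The map ρ : Q(T(M)) → Q(T_r(M)), 𝔅 ↦ 𝔅^r := {int(closure(U)) : U ∈ 𝔅}, is a homeomorphism between the Stonean spaces of T(M) and T_r(M); in particular ρ is a bijection, and ρ(Q_U(T(M))) = Q_{int(closure(U))}(T_r(M)) for every open U ⊆ M. -/
import Mathlib


open TopologicalSpace

theorem regopen_idem {X : Type*} [TopologicalSpace X] (s : Set X) :
    interior (closure (interior (closure s))) = interior (closure s) := by
  apply subset_antisymm
  · apply interior_mono
    calc closure (interior (closure s)) ⊆ closure (closure s) := closure_mono interior_subset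
    _ = closure s := closure_closure
  · exact isOpen_interior.subset_interior_closure

/-- The lattice `T_r(M)` of regular open subsets of `M`, ordered by inclusion. -/
abbrev RegOpen (M : Type*) [TopologicalSpace M] : Type _ :=
  {U : Set M // U = interior (closure U)}

instance {M : Type*} [TopologicalSpace M] : OrderBot (RegOpen M) where
  bot := ⟨∅, by simp⟩
  bot_le U := by exact Set.empty_subset _

/-- The regularization map `U ↦ int(closure U)` from open sets to regular open sets. -/
def Opens.reg {M : Type*} [TopologicalSpace M] (U : Opens M) : RegOpen M :=
  ⟨interior (closure (U : Set M)), (regopen_idem _).symm⟩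

/-- A filter base in a partially ordered set `L` with least element `⊥`. -/
def IsFilterBase {L : Type*} [PartialOrder L] [OrderBot L] (B : Set L) : Prop :=
  B.Nonempty ∧ (⊥ : L) ∉ B ∧ ∀ a ∈ B, ∀ b ∈ B, ∃ c ∈ B, c ≤ a ∧ c ≤ b

/-- A quasipoint of `L`: a maximal filter base. -/
def IsQuasipoint {L : Type*} [PartialOrder L] [OrderBot L] (B : Set L) : Prop :=
  IsFilterBase B ∧ ∀ C : Set L, IsFilterBase C → B ⊆ C → C = B

/-- The Stonean space of a lattice: the set of its quasipoints. -/
def Quasipoints (L : Type*) [PartialOrder L] [OrderBot L] : Type _ :=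
  {B : Set L // IsQuasipoint B}

/-- The Stone topology, generated by the basic sets `Q_a = {𝔅 : a ∈ 𝔅}`. -/
instance {L : Type*} [PartialOrder L] [OrderBot L] : TopologicalSpace (Quasipoints L) :=
  TopologicalSpace.generateFrom {S | ∃ a : L, S = {B : Quasipoints L | a ∈ B.1}}

section Aux

variable {L : Type*} [PartialOrder L] [OrderBot L]

lemma quasipoint_upward {B : Set L} (hB : IsQuasipoint B) {a b : L}
    (hb : b ∈ B) (hba : b ≤ a) : a ∈ B := by
  have hbot : a ≠ ⊥ := by
    rintro rfl
    exact hB.1.2.1 (le_bot_iff.mp hba ▸ hb)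
  have hfb : IsFilterBase (B ∪ {a}) := by
    refine ⟨⟨b, Or.inl hb⟩, ?_, ?_⟩
    · rintro (h | h)
      · exact hB.1.2.1 h
      · exact hbot (Set.mem_singleton_iff.mp h).symm
    · rintro x (hx | hx) y (hy | hy)
      · obtain ⟨c, hc, h1, h2⟩ := hB.1.2.2 x hx y hy
        exact ⟨c, Or.inl hc, h1, h2⟩
      · obtain ⟨c, hc, h1, h2⟩ := hB.1.2.2 x hx b hb
        exact ⟨c, Or.inl hc, h1, (Set.mem_singleton_iff.mp hy) ▸ le_trans h2 hba⟩
      · obtain ⟨c, hc, h1, h2⟩ := hB.1.2.2 b hb y hy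
        exact ⟨c, Or.inl hc, (Set.mem_singleton_iff.mp hx) ▸ le_trans h1 hba, h2⟩
      · exact ⟨b, Or.inl hb, (Set.mem_singleton_iff.mp hx) ▸ hba,
          (Set.mem_singleton_iff.mp hy) ▸ hba⟩
  have h := hB.2 _ hfb Set.subset_union_left
  rw [← h]; exact Or.inr rfl

lemma exists_quasipoint_superset {B : Set L} (hB : IsFilterBase B) :
    ∃ C : Set L, IsQuasipoint C ∧ B ⊆ C := by
  have hz : ∀ c ⊆ {C : Set L | IsFilterBase C}, IsChain (· ⊆ ·) c → c.Nonempty →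
      ∃ ub ∈ {C : Set L | IsFilterBase C}, ∀ s ∈ c, s ⊆ ub := by
    intro c hcS hchain ⟨s, hs⟩
    refine ⟨⋃₀ c, ⟨?_, ?_, ?_⟩, fun t ht => Set.subset_sUnion_of_mem ht⟩
    · obtain ⟨x, hx⟩ := (hcS hs).1
      exact ⟨x, s, hs, hx⟩
    · rintro ⟨t, htc, hbot⟩
      exact (hcS htc).2.1 hbot
    · rintro a ⟨t, htc, hat⟩ b ⟨u, huc, hbu⟩
      rcases hchain.total htc huc with h | h
      · obtain ⟨d, hd, h1, h2⟩ := (hcS huc).2.2 a (h hat) b hbu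
        exact ⟨d, ⟨u, huc, hd⟩, h1, h2⟩
      · obtain ⟨d, hd, h1, h2⟩ := (hcS htc).2.2 a hat b (h hbu)
        exact ⟨d, ⟨t, htc, hd⟩, h1, h2⟩
  obtain ⟨m, hBm, hm⟩ := zorn_subset_nonempty {C : Set L | IsFilterBase C} hz B hB
  exact ⟨m, ⟨hm.1, fun C hC hmC => subset_antisymm (hm.2 hC hmC) hmC⟩, hBm⟩

end Aux

section Top

variable {M : Type*} [TopologicalSpace M]

lemma open_inter_reg {W U : Set M} (hW : IsOpen W)
    (h : (W ∩ interior (closure U)).Nonempty) : (W ∩ U).Nonempty := by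
  obtain ⟨x, hxW, hxU⟩ := h
  exact mem_closure_iff.mp (interior_subset hxU) W hW hxW

lemma reg_inter_nonempty {U V : Set M} (hV : IsOpen V)
    (h : (interior (closure U) ∩ interior (closure V)).Nonempty) :
    (U ∩ V).Nonempty := by
  have h1 : (interior (closure U) ∩ V).Nonempty := open_inter_reg isOpen_interior h
  have h2 : (V ∩ U).Nonempty := open_inter_reg hV (by rwa [Set.inter_comm] at h1)
  rwa [Set.inter_comm] at h2

/-- Criterion for membership in a quasipoint of `Opens M`. -/
lemma mem_quasipoint_of_inf_ne_bot {𝔅 : Set (Opens M)} (h : IsQuasipoint 𝔅)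
    {U : Opens M} (hU : ∀ V ∈ 𝔅, U ⊓ V ≠ ⊥) : U ∈ 𝔅 := by
  have hfb : IsFilterBase (𝔅 ∪ {W | ∃ V ∈ 𝔅, W = U ⊓ V}) := by
    refine ⟨h.1.1.mono Set.subset_union_left, ?_, ?_⟩
    · rintro (hb | ⟨V, hV, hb⟩)
      · exact h.1.2.1 hb
      · exact hU V hV hb.symm
    · rintro a (ha | ⟨Va, hVa, rfl⟩) b (hb | ⟨Vb, hVb, rfl⟩)
      · obtain ⟨c, hc, h1, h2⟩ := h.1.2.2 a ha b hb
        exact ⟨c, Or.inl hc, h1, h2⟩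
      · obtain ⟨c, hc, h1, h2⟩ := h.1.2.2 a ha Vb hVb
        exact ⟨U ⊓ c, Or.inr ⟨c, hc, rfl⟩, le_trans inf_le_right h1,
          inf_le_inf_left U h2⟩
      · obtain ⟨c, hc, h1, h2⟩ := h.1.2.2 Va hVa b hb
        exact ⟨U ⊓ c, Or.inr ⟨c, hc, rfl⟩, inf_le_inf_left U h1,
          le_trans inf_le_right h2⟩
      · obtain ⟨c, hc, h1, h2⟩ := h.1.2.2 Va hVa Vb hVb
        exact ⟨U ⊓ c, Or.inr ⟨c, hc, rfl⟩, inf_le_inf_left U h1, inf_le_inf_left U h2⟩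
  have heq := h.2 _ hfb Set.subset_union_left
  obtain ⟨V₀, hV₀⟩ := h.1.1
  have hUV : U ⊓ V₀ ∈ 𝔅 := by rw [← heq]; exact Or.inr ⟨V₀, hV₀, rfl⟩
  exact quasipoint_upward h hUV inf_le_left

/-- The inclusion of regular opens into opens. -/
def iotaReg (W : RegOpen M) : Opens M := ⟨W.1, by rw [W.2]; exact isOpen_interior⟩

lemma reg_iotaReg (W : RegOpen M) : Opens.reg (iotaReg W) = W := Subtype.ext W.2.symm

lemma opens_ne_bot_iff {U : Opens M} : U ≠ ⊥ ↔ (U : Set M).Nonempty :=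
  U.ne_bot_iff_nonempty

lemma reg_ne_bot {U : Opens M} (hU : U ≠ ⊥) : Opens.reg U ≠ ⊥ := by
  intro h
  apply hU
  have h1 : interior (closure (U : Set M)) = (∅ : Set M) := congrArg Subtype.val h
  have h2 : (U : Set M) ⊆ interior (closure (U : Set M)) :=
    U.isOpen.subset_interior_closure
  rw [h1] at h2
  exact Opens.coe_eq_empty.mp (Set.subset_empty_iff.mp h2)

lemma regopen_le_iff {W W' : RegOpen M} : W ≤ W' ↔ W.1 ⊆ W'.1 := Iff.rfl

lemma regopen_ne_bot_iff {W : RegOpen M} : W ≠ ⊥ ↔ W.1.Nonempty := by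
  rw [Set.nonempty_iff_ne_empty]
  constructor
  · intro h h'; exact h (Subtype.ext h')
  · intro h h'; exact h (congrArg Subtype.val h')

/-- Key lemma: membership of `reg U` in `reg '' 𝔅` determines membership of `U` in `𝔅`. -/
lemma reg_mem_image_iff {𝔅 : Set (Opens M)} (h : IsQuasipoint 𝔅) (U : Opens M) :
    Opens.reg U ∈ Opens.reg '' 𝔅 ↔ U ∈ 𝔅 := by
  constructor
  · rintro ⟨U', hU', hUU'⟩
    apply mem_quasipoint_of_inf_ne_bot h
    intro V hV
    obtain ⟨c, hc, h1, h2⟩ := h.1.2.2 U' hU' V hV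
    have hcne : (c : Set M).Nonempty := opens_ne_bot_iff.mp (by rintro rfl; exact h.1.2.1 hc)
    have hsub : (c : Set M) ⊆ (V : Set M) ∩ interior (closure (U : Set M)) := by
      intro x hx
      refine ⟨h2 hx, ?_⟩
      have : (U' : Set M) ⊆ interior (closure (U' : Set M)) :=
        U'.isOpen.subset_interior_closure
      have hval : interior (closure (U' : Set M)) = interior (closure (U : Set M)) :=
        congrArg Subtype.val hUU'
      exact hval ▸ this (h1 hx)
    have : ((V : Set M) ∩ (U : Set M)).Nonempty :=
      open_inter_reg V.isOpen (hcne.mono hsub)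
    rw [Set.inter_comm] at this
    rw [Ne, ← Opens.coe_eq_empty, Opens.coe_inf, ← Set.not_nonempty_iff_eq_empty]
    exact fun hc' => hc' this
  · exact fun hU => ⟨U, hU, rfl⟩

/-- The image of a quasipoint under `reg` is a quasipoint. -/
lemma quasipoint_reg_image {𝔅 : Set (Opens M)} (h : IsQuasipoint 𝔅) :
    IsQuasipoint (Opens.reg '' 𝔅) := by
  constructor
  · refine ⟨h.1.1.image _, ?_, ?_⟩
    · rintro ⟨U, hU, hUbot⟩
      exact reg_ne_bot (fun h' => h.1.2.1 (h' ▸ hU)) hUbot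
    · rintro a ⟨Ua, hUa, rfl⟩ b ⟨Ub, hUb, rfl⟩
      obtain ⟨c, hc, h1, h2⟩ := h.1.2.2 Ua hUa Ub hUb
      refine ⟨Opens.reg c, ⟨c, hc, rfl⟩, ?_, ?_⟩
      · exact interior_mono (closure_mono h1)
      · exact interior_mono (closure_mono h2)
  · intro C hC hsub
    apply subset_antisymm _ hsub
    intro W hW
    have hmem : iotaReg W ∈ 𝔅 := by
      apply mem_quasipoint_of_inf_ne_bot h
      intro V hV
      obtain ⟨c, hc, h1, h2⟩ := hC.2.2 W hW (Opens.reg V) (hsub ⟨V, hV, rfl⟩)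
      have hcne : c.1.Nonempty := regopen_ne_bot_iff.mp (fun h' => hC.2.1 (h' ▸ hc))
      have hsub2 : c.1 ⊆ (W.1 : Set M) ∩ interior (closure (V : Set M)) :=
        fun x hx => ⟨h1 hx, h2 hx⟩
      have hWopen : IsOpen W.1 := (iotaReg W).isOpen
      have : (W.1 ∩ (V : Set M)).Nonempty := open_inter_reg hWopen (hcne.mono hsub2)
      rw [Ne, ← Opens.coe_eq_empty, Opens.coe_inf, ← Set.not_nonempty_iff_eq_empty]
      exact fun hc' => hc' this
    have : Opens.reg (iotaReg W) ∈ Opens.reg '' 𝔅 := ⟨iotaReg W, hmem, rfl⟩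
    rwa [reg_iotaReg] at this

end Top

/-- The map `𝔅 ↦ 𝔅^r` is a homeomorphism from the Stonean space of `T(M)` onto the
Stonean space of `T_r(M)`, carrying each basic open set `Q_U(T(M))` onto
`Q_{int(closure U)}(T_r(M))`. -/
theorem stonean_homeo_of_reg {M : Type*} [TopologicalSpace M] :
    ∃ ρ : Quasipoints (Opens M) ≃ₜ Quasipoints (RegOpen M),
      (∀ 𝔅 : Quasipoints (Opens M), (ρ 𝔅).1 = Opens.reg '' 𝔅.1) ∧
      (∀ U : Opens M,
        ρ '' {𝔅 : Quasipoints (Opens M) | U ∈ 𝔅.1} =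
          {β : Quasipoints (RegOpen M) | Opens.reg U ∈ β.1}) := by
  classical
  -- the forward map
  set F : Quasipoints (Opens M) → Quasipoints (RegOpen M) :=
    fun 𝔅 => ⟨Opens.reg '' 𝔅.1, quasipoint_reg_image 𝔅.2⟩ with hF
  -- key membership fact
  have key : ∀ (𝔅 : Quasipoints (Opens M)) (U : Opens M),
      Opens.reg U ∈ (F 𝔅).1 ↔ U ∈ 𝔅.1 := fun 𝔅 U => reg_mem_image_iff 𝔅.2 U
  have hinj : Function.Injective F := by
    intro 𝔅 𝔅' h
    apply Subtype.ext
    ext U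
    rw [← key 𝔅 U, ← key 𝔅' U, h]
  have hsurj : Function.Surjective F := by
    intro β
    have hfb : IsFilterBase (iotaReg '' β.1) := by
      refine ⟨β.2.1.1.image _, ?_, ?_⟩
      · rintro ⟨W, hW, hWbot⟩
        apply β.2.1.2.1
        have : W = ⊥ := Subtype.ext (congrArg (fun U : Opens M => (U : Set M)) hWbot)
        exact this ▸ hW
      · rintro a ⟨Wa, hWa, rfl⟩ b ⟨Wb, hWb, rfl⟩
        obtain ⟨c, hc, h1, h2⟩ := β.2.1.2.2 Wa hWa Wb hWb
        exact ⟨iotaReg c, ⟨c, hc, rfl⟩, h1, h2⟩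
    obtain ⟨𝔅, h𝔅, hsub⟩ := exists_quasipoint_superset hfb
    refine ⟨⟨𝔅, h𝔅⟩, ?_⟩
    apply Subtype.ext
    have hβsub : β.1 ⊆ Opens.reg '' 𝔅 := by
      intro W hW
      have : Opens.reg (iotaReg W) ∈ Opens.reg '' 𝔅 :=
        ⟨iotaReg W, hsub ⟨W, hW, rfl⟩, rfl⟩
      rwa [reg_iotaReg] at this
    exact β.2.2 _ (quasipoint_reg_image h𝔅).1 hβsub
  set e : Quasipoints (Opens M) ≃ Quasipoints (RegOpen M) :=
    Equiv.ofBijective F ⟨hinj, hsurj⟩ with he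
  have heF : ∀ 𝔅, e 𝔅 = F 𝔅 := fun _ => rfl
  -- preimage computations
  have hpre1 : ∀ W : RegOpen M,
      F ⁻¹' {β : Quasipoints (RegOpen M) | W ∈ β.1} =
        {𝔅 : Quasipoints (Opens M) | iotaReg W ∈ 𝔅.1} := by
    intro W
    ext 𝔅
    simp only [Set.mem_preimage, Set.mem_setOf_eq]
    conv_lhs => rw [← reg_iotaReg W]
    exact key 𝔅 (iotaReg W)
  have hpre2 : ∀ U : Opens M,
      e.symm ⁻¹' {𝔅 : Quasipoints (Opens M) | U ∈ 𝔅.1} =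
        {β : Quasipoints (RegOpen M) | Opens.reg U ∈ β.1} := by
    intro U
    ext β
    simp only [Set.mem_preimage, Set.mem_setOf_eq]
    rw [← key (e.symm β) U, show F (e.symm β) = β from e.apply_symm_apply β]
  have hcont1 : Continuous e := by
    rw [continuous_generateFrom_iff]
    rintro s ⟨W, rfl⟩
    have : (⇑e) ⁻¹' {β : Quasipoints (RegOpen M) | W ∈ β.1} =
        {𝔅 : Quasipoints (Opens M) | iotaReg W ∈ 𝔅.1} := hpre1 W
    rw [this]
    exact isOpen_generateFrom_of_mem ⟨iotaReg W, rfl⟩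
  have hcont2 : Continuous e.symm := by
    rw [continuous_generateFrom_iff]
    rintro s ⟨U, rfl⟩
    rw [hpre2 U]
    exact isOpen_generateFrom_of_mem ⟨Opens.reg U, rfl⟩
  refine ⟨⟨e, hcont1, hcont2⟩, fun 𝔅 => rfl, ?_⟩
  intro U
  rw [show (⟨e, hcont1, hcont2⟩ : Quasipoints (Opens M) ≃ₜ Quasipoints (RegOpen M)) '' _ =
      e '' {𝔅 : Quasipoints (Opens M) | U ∈ 𝔅.1} from rfl]
  rw [Equiv.image_eq_preimage_symm]
  exact hpre2 U
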